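/- Let X and Y be finite types, let f be a faithful X-Y embedding, let θ ⊆ Δ_X be an arbitrary constraint, and let D_X ⊆ Δ_X and D_Y ⊆ Δ_Y correspond under f. Then D_X|θ = ⋃_{μ ∈ D_X} μ|θ and D_Y|f*(θ) = ⋃_{ν ∈ D_Y} ν|f*(θ) also correspond under f. -/

import Mathlib

/-!
A faithful embedding of finite types is the preimage map of a surjection `g : Y → X`, so `μ`
and `ν` correspond exactly when `μ = g_* ν`, and `f*(θ) = {ν | g_* ν ∈ θ}`. Pushing forward
along `g` can only decrease relative entropy (log-sum inequality), and conversely every `μ'`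
lifts to `ν'(y) = μ'(g y) · ν(y | g y)` with `g_* ν' = μ'` and `D(ν'‖ν) = D(μ'‖g_* ν)`. Hence
a projection of `ν` onto `f*(θ)` pushes forward to a projection of `g_* ν` onto `θ`, and a
projection of `g_* ν` onto `θ` lifts to a projection of `ν` onto `f*(θ)`.
-/

/-- A probability measure (probability mass function) on a finite type. -/
structure PM (X : Type) [Fintype X] where
  pm : X → ℝ
  nonneg : ∀ x, 0 ≤ pm x
  total : ∑ x, pm x = 1

namespace PM

variable {X Y : Type} [Fintype X] [Fintype Y]

/-- The probability of a set `S`: `μ(S) = ∑_{x ∈ S} μ(x)`. -/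
noncomputable def prob (μ : PM X) (S : Set X) : ℝ := ∑ x, S.indicator μ.pm x

lemma prob_nonneg (μ : PM X) (S : Set X) : 0 ≤ μ.prob S :=
  Finset.sum_nonneg fun x _ => Set.indicator_apply_nonneg fun _ => μ.nonneg x

/-- Marginal on the first component: `μ_X(A) = μ(A × Y)`. -/
noncomputable def margFst (μ : PM (X × Y)) : PM X where
  pm x := ∑ y, μ.pm (x, y)
  nonneg x := Finset.sum_nonneg fun y _ => μ.nonneg (x, y)
  total := by rw [← μ.total, ← Fintype.sum_prod_type]

/-- Marginal on the second component: `μ_Y(B) = μ(X × B)`. -/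
noncomputable def margSnd (μ : PM (X × Y)) : PM Y where
  pm y := ∑ x, μ.pm (x, y)
  nonneg y := Finset.sum_nonneg fun x _ => μ.nonneg (x, y)
  total := by rw [← μ.total, ← Fintype.sum_prod_type_right]

/-- Conditioning `μ|S`; the junk value `μ` is returned when `μ(S) = 0`. -/
noncomputable def cond (μ : PM X) (S : Set X) : PM X :=
  if h : 0 < μ.prob S then
    { pm := fun x => S.indicator μ.pm x / μ.prob S
      nonneg := fun x =>
        div_nonneg (Set.indicator_apply_nonneg fun _ => μ.nonneg x) (le_of_lt h)
      total := by
        rw [← Finset.sum_div]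
        exact div_self (ne_of_gt h) }
  else μ

end PM

open PM

/-- An `X`-inference procedure: a partial map on sets of probability measures. -/
structure InfProc (X : Type) [Fintype X] where
  dom : Set (Set (PM X))
  map : Set (PM X) → Set (PM X)
  map_subset : ∀ A ∈ dom, map A ⊆ A
  map_empty_iff : ∀ A ∈ dom, (map A = ∅ ↔ A = ∅)

/-- `KB ⊢_I θ`. -/
def Infers {X : Type} [Fintype X] (I : InfProc X) (KB θ : Set (PM X)) : Prop :=
  I.map KB ⊆ θ

section Lift

variable {X Y : Type} [Fintype X] [Fintype Y]

/-- A constraint on `Δ_X` viewed as a constraint on `Δ_{X×Y}`: `KB↑`. -/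
def liftKB (Y : Type) [Fintype Y] (KB : Set (PM X)) : Set (PM (X × Y)) :=
  {μ | margFst μ ∈ KB}

/-- `proj_X(B) = {μ_X : μ ∈ B}`. -/
def projFst (B : Set (PM (X × Y))) : Set (PM X) := margFst '' B

/-- `ψ ⊆ Δ_{X×Y}` is `X`-conservative over `KB ⊆ Δ_X`. -/
def Conservative (KB : Set (PM X)) (ψ : Set (PM (X × Y))) : Prop :=
  projFst (liftKB Y KB ∩ ψ) = KB

end Lift

/-- Robustness of a finitary inference procedure. -/
def Robust (I : ∀ (X : Type) [Fintype X], InfProc X) : Prop :=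
  ∀ (X Y : Type) [Fintype X] [Fintype Y], ∀ KB φ : Set (PM X),
    KB ∈ (I X).dom → ∀ ψ : Set (PM (X × Y)), Conservative KB ψ →
      (Infers (I X) KB φ ↔ Infers (I (X × Y)) (liftKB Y KB ∩ ψ) (liftKB Y φ))

/-- An inference procedure is essentially entailment. -/
def EssEntail {X : Type} [Fintype X] (I : InfProc X) : Prop :=
  ∀ KB ∈ I.dom, ∀ (S : Set X) (α β : ℝ),
    Infers I KB {μ | α < μ.prob S ∧ μ.prob S < β} →
    KB ⊆ {μ | α ≤ μ.prob S ∧ μ.prob S ≤ β}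

def DI1 (I : ∀ (X : Type) [Fintype X], InfProc X) : Prop :=
  ∀ (X : Type) [Fintype X], ∀ (S : Set X) (α β : ℝ), α ≤ β →
    {μ : PM X | α ≤ μ.prob S ∧ μ.prob S ≤ β} ∈ (I X).dom

def DI2 (I : ∀ (X : Type) [Fintype X], InfProc X) : Prop :=
  ∀ (X Y : Type) [Fintype X] [Fintype Y], ∀ KB : Set (PM X),
    KB ∈ (I X).dom → liftKB Y KB ∈ (I (X × Y)).dom

def DI3 (I : ∀ (X : Type) [Fintype X], InfProc X) : Prop :=
  ∀ (X : Type) [Fintype X], ∀ KB₁ KB₂ : Set (PM X),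
    KB₁ ∈ (I X).dom → KB₂ ∈ (I X).dom → KB₁ ∩ KB₂ ∈ (I X).dom

/-- An `X`-`Y` embedding: a homomorphism of set algebras. -/
structure Emb (X Y : Type) where
  f : Set X → Set Y
  map_union : ∀ S T, f (S ∪ T) = f S ∪ f T
  map_compl : ∀ S, f Sᶜ = (f S)ᶜ

/-- A faithful embedding. -/
def Emb.Faithful {X Y : Type} (e : Emb X Y) : Prop :=
  ∀ S T : Set X, S ⊆ T ↔ e.f S ⊆ e.f T

section Embeddings

variable {X Y : Type} [Fintype X] [Fintype Y]

/-- `μ` and `ν` correspond under `f`. -/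
def Corr (e : Emb X Y) (μ : PM X) (ν : PM Y) : Prop :=
  ∀ S : Set X, μ.prob S = ν.prob (e.f S)

/-- `f*(D)`, the union over `μ ∈ D` of the measures corresponding to `μ`. -/
def fstar (e : Emb X Y) (D : Set (PM X)) : Set (PM Y) :=
  {ν | ∃ μ ∈ D, Corr e μ ν}

/-- Sets of measures `D_X` and `D_Y` correspond under `f`. -/
def SetCorr (e : Emb X Y) (DX : Set (PM X)) (DY : Set (PM Y)) : Prop :=
  (∀ ν ∈ DY, ∃ μ ∈ DX, Corr e μ ν) ∧ (∀ μ ∈ DX, ∃ ν ∈ DY, Corr e μ ν)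

end Embeddings

/-- Representation independence of a finitary inference procedure. -/
def RepInd (I : ∀ (X : Type) [Fintype X], InfProc X) : Prop :=
  ∀ (X Y : Type) [Fintype X] [Fintype Y] (e : Emb X Y), e.Faithful →
    (∀ KB : Set (PM X), KB ∈ (I X).dom ↔ fstar e KB ∈ (I Y).dom) ∧
    (∀ KB : Set (PM X), KB ∈ (I X).dom → ∀ θ : Set (PM X),
      (Infers (I X) KB θ ↔ Infers (I Y) (fstar e KB) (fstar e θ)))

def DI4 (I : ∀ (X : Type) [Fintype X], InfProc X) : Prop :=
  ∀ (X Y : Type) [Fintype X] [Fintype Y] (e : Emb X Y), e.Faithful →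
    ∀ KB : Set (PM X), (KB ∈ (I X).dom ↔ fstar e KB ∈ (I Y).dom)

/-- `A ⇔ B` for sets of measures. -/
def iffSet {α : Type*} (A B : Set α) : Set α := (A ∩ B) ∪ (Aᶜ ∩ Bᶜ)

def DI5 (I : ∀ (X : Type) [Fintype X], InfProc X) : Prop :=
  ∀ (X Y : Type) [Fintype X] [Fintype Y] (KB : Set (PM (X × Y))) (e : Emb X Y),
    e.Faithful → KB ∈ (I (X × Y)).dom → ∀ φ₁ : Set (PM X),
      KB ∩ iffSet (liftKB Y φ₁) {μ | margSnd μ ∈ fstar e φ₁} ∈ (I (X × Y)).dom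

/-- Minimal default independence. -/
def MDI (I : ∀ (X : Type) [Fintype X], InfProc X) : Prop :=
  ∀ (X Y : Type) [Fintype X] [Fintype Y], ∀ KB : Set (PM X), ∀ (S : Set X) (T : Set Y),
    liftKB Y KB ∈ (I (X × Y)).dom →
    Infers (I (X × Y)) (liftKB Y KB)
      {μ | μ.prob (S ×ˢ T) = μ.prob (S ×ˢ (Set.univ : Set Y)) * μ.prob ((Set.univ : Set X) ×ˢ T)}

/-- `KB` depends only on `S₁, …, S_k`. -/
def DependsOnly {X : Type} [Fintype X] {k : ℕ} (KB : Set (PM X)) (S : Fin k → Set X) : Prop :=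
  ∀ μ μ' : PM X, (∀ i, μ.prob (S i) = μ'.prob (S i)) → (μ ∈ KB ↔ μ' ∈ KB)

/-- An atom over `S₁, …, S_k`. -/
def Atom {X : Type} {k : ℕ} (S : Fin k → Set X) (c : Fin k → Bool) : Set X :=
  ⋂ i, (if c i then S i else (S i)ᶜ)

section KL

variable {X : Type} [Fintype X]

/-- Absolute continuity of pmfs. -/
def AbsCont (μ' μ : PM X) : Prop := ∀ x, μ.pm x = 0 → μ'.pm x = 0

/-- Relative entropy `D(μ'‖μ) ∈ [0,∞]` (it is `⊤` unless `μ' ≪ μ`). -/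
noncomputable def KL (μ' μ : PM X) : EReal := by
  classical
  exact if AbsCont μ' μ then
    ((∑ x, μ'.pm x * Real.log (μ'.pm x / μ.pm x) : ℝ) : EReal)
  else ⊤

/-- The relative-entropy projection `μ|θ`. -/
def klProj (μ : PM X) (θ : Set (PM X)) : Set (PM X) :=
  {μ' | μ' ∈ θ ∧ KL μ' μ ≠ ⊤ ∧ ∀ μ'' ∈ θ, KL μ' μ ≤ KL μ'' μ}

/-- `D|θ = ⋃_{μ ∈ D} μ|θ`. -/
def DProj (D : Set (PM X)) (θ : Set (PM X)) : Set (PM X) :=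
  ⋃ μ ∈ D, klProj μ θ

end KL

section Products

variable {n : ℕ} {X : Fin n → Type} [∀ i, Fintype (X i)]

/-- The `i`-th marginal of a measure on a finite product. -/
noncomputable def margPi (μ : PM (∀ i, X i)) (i : Fin n) : PM (X i) where
  pm a := μ.prob {x | x i = a}
  nonneg a := PM.prob_nonneg _ _
  total := by
    classical
    unfold PM.prob
    rw [Finset.sum_comm]
    have h : ∀ x : (∀ i, X i),
        (∑ a, ({y : ∀ j, X j | y i = a}).indicator μ.pm x) = μ.pm x := by
      intro x
      simp [Set.indicator_apply]
    simp only [h]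
    exact μ.total

/-- `μ` is a product measure on `X₁ × ⋯ × Xₙ`. -/
def IsProdPM (μ : PM (∀ i, X i)) : Prop :=
  ∃ μi : ∀ i, PM (X i), ∀ U : ∀ i, Set (X i),
    μ.prob {x | ∀ i, x i ∈ U i} = ∏ i, (μi i).prob (U i)

end Products

/-- The set `P_Π(X)` of product measures. -/
def PPi {n : ℕ} (X : Fin n → Type) [∀ i, Fintype (X i)] : Set (PM (∀ i, X i)) :=
  {μ | IsProdPM μ}

/-- `e` is a product embedding. -/
def IsProdEmb {n : ℕ} {X Y : Fin n → Type} (e : Emb (∀ i, X i) (∀ i, Y i)) : Prop :=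
  ∃ ei : ∀ i, Emb (X i) (Y i), ∀ S : Set (∀ i, X i),
    e.f S = ⋃ x ∈ S, {y | ∀ i, y i ∈ (ei i).f {x i}}

open Finset Function

lemma mul_log_add_sub_le_mul_log_div {a b c : ℝ} (ha : 0 ≤ a) (hb : 0 ≤ b) (hc : 0 < c)
    (hab : b = 0 → a = 0) : a * Real.log c + a - b * c ≤ a * Real.log (a / b) := by
  rcases ha.eq_or_lt with rfl | ha
  · simpa using mul_nonneg hb hc.le
  have hb : 0 < b := hb.lt_of_ne fun h => ha.ne' (hab h.symm)
  have hlog := Real.one_sub_inv_le_log_of_pos (x := a / (b * c)) (by positivity)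
  have hsplit : Real.log (a / b) = Real.log c + Real.log (a / (b * c)) := by
    rw [← Real.log_mul hc.ne' (by positivity)]
    congr 1
    field_simp
  have hinv : a * (1 - (a / (b * c))⁻¹) = a - b * c := by
    field_simp
  rw [hsplit, mul_add]
  nlinarith [mul_le_mul_of_nonneg_left hlog ha.le]

/-- The log-sum inequality. -/
theorem sum_mul_log_sum_div_sum_le {ι : Type*} (s : Finset ι) {a b : ι → ℝ}
    (ha : ∀ i ∈ s, 0 ≤ a i) (hb : ∀ i ∈ s, 0 ≤ b i) (hab : ∀ i ∈ s, b i = 0 → a i = 0) :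
    (∑ i ∈ s, a i) * Real.log ((∑ i ∈ s, a i) / ∑ i ∈ s, b i) ≤
      ∑ i ∈ s, a i * Real.log (a i / b i) := by
  set A := ∑ i ∈ s, a i
  set B := ∑ i ∈ s, b i
  have ha_zero : B = 0 → ∀ i ∈ s, a i = 0 := fun hB i hi =>
    hab i hi ((sum_eq_zero_iff_of_nonneg hb).1 hB i hi)
  rcases (sum_nonneg ha).eq_or_lt with hA | hA
  · rw [show A = 0 from hA.symm, zero_mul]
    exact sum_nonneg fun i hi => by rw [(sum_eq_zero_iff_of_nonneg ha).1 hA.symm i hi, zero_mul]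
  have hB : 0 < B := (sum_nonneg hb).lt_of_ne fun hB =>
    hA.ne' (sum_eq_zero (ha_zero hB.symm))
  calc A * Real.log (A / B) = ∑ i ∈ s, (a i * Real.log (A / B) + a i - b i * (A / B)) := by
        rw [sum_sub_distrib, sum_add_distrib, ← sum_mul, ← sum_mul]
        field_simp
        ring
    _ ≤ ∑ i ∈ s, a i * Real.log (a i / b i) := sum_le_sum fun i hi =>
        mul_log_add_sub_le_mul_log_div (ha i hi) (hb i hi) (by positivity) (hab i hi)

namespace Emb

variable {X Y : Type} (e : Emb X Y)

lemma map_univ : e.f Set.univ = Set.univ := by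
  have h := e.map_union ∅ ∅ᶜ
  rwa [Set.union_compl_self, e.map_compl, Set.union_compl_self] at h

lemma map_empty : e.f ∅ = ∅ := by
  rw [← Set.compl_univ, e.map_compl, e.map_univ, Set.compl_univ]

lemma monotone : Monotone e.f := fun S T h => by
  rw [← Set.union_eq_self_of_subset_left h, e.map_union]
  exact Set.subset_union_left

lemma exists_mem_map_singleton [Fintype X] (y : Y) : ∃ x, y ∈ e.f {x} := by
  classical
  by_contra! h
  have hnot : ∀ s : Finset X, y ∉ e.f s := by
    intro s
    induction s using Finset.induction_on with
    | empty => simp [map_empty]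
    | insert a s _ ih =>
      rw [coe_insert, Set.insert_eq, e.map_union]
      exact fun h' => h'.elim (h a) ih
  exact hnot univ (by simp [map_univ])

theorem exists_eq_preimage [Fintype X] : ∃ g : Y → X, ∀ S, e.f S = g ⁻¹' S := by
  choose g hg using e.exists_mem_map_singleton
  refine ⟨g, fun S => Set.ext fun y => ⟨fun hy => ?_, fun hy => ?_⟩⟩
  · by_contra hyS
    have h := e.monotone (Set.singleton_subset_iff.2 (Set.mem_compl hyS)) (hg y)
    exact (e.map_compl S ▸ h) hy
  · exact e.monotone (Set.singleton_subset_iff.2 hy) (hg y)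

theorem Faithful.exists_surjective_eq_preimage [Fintype X] {e : Emb X Y} (hf : e.Faithful) :
    ∃ g : Y → X, Surjective g ∧ ∀ S, e.f S = g ⁻¹' S := by
  obtain ⟨g, hg⟩ := e.exists_eq_preimage
  refine ⟨g, fun x => ?_, hg⟩
  by_contra! h
  have hsub : ({x} : Set X) ⊆ ∅ := (hf _ _).2 (by rw [hg, hg]; exact fun y hy => h y hy)
  exact hsub rfl

end Emb

namespace PM

variable {X Y : Type} [Fintype X] [Fintype Y]

@[ext]
lemma ext {μ ν : PM X} (h : ∀ x, μ.pm x = ν.pm x) : μ = ν := by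
  cases μ; cases ν; congr; exact funext h

lemma prob_eq_sum_filter (μ : PM X) (S : Set X) [DecidablePred (· ∈ S)] :
    μ.prob S = ∑ x ∈ univ.filter (· ∈ S), μ.pm x := by
  simp only [prob, sum_filter, Set.indicator_apply]

lemma prob_singleton [DecidableEq X] (μ : PM X) (x : X) : μ.prob {x} = μ.pm x := by
  simp [prob_eq_sum_filter, filter_eq']

section Map

variable [DecidableEq X]

noncomputable def map (g : Y → X) (ν : PM Y) : PM X where
  pm x := ∑ y ∈ univ.filter (g · = x), ν.pm y
  nonneg _ := sum_nonneg fun y _ => ν.nonneg y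
  total := by rw [sum_fiberwise]; exact ν.total

lemma map_pm (g : Y → X) (ν : PM Y) (x : X) :
    (ν.map g).pm x = ∑ y ∈ univ.filter (g · = x), ν.pm y := rfl

lemma prob_map (g : Y → X) (ν : PM Y) (S : Set X) : (ν.map g).prob S = ν.prob (g ⁻¹' S) := by
  classical
  rw [prob_eq_sum_filter, prob_eq_sum_filter,
    ← sum_fiberwise_of_maps_to (t := univ.filter (· ∈ S)) (g := g) (by simp)]
  refine sum_congr rfl fun x hx => ?_
  rw [map_pm, filter_filter]
  congr 1
  ext y
  simp only [mem_filter, mem_univ, true_and, Set.mem_preimage] at hx ⊢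
  exact ⟨fun h => ⟨h ▸ hx, h⟩, And.right⟩

end Map

end PM

section Correspondence

variable {X Y : Type} [Fintype X] [Fintype Y] [DecidableEq X] {e : Emb X Y} {g : Y → X}

lemma corr_iff_eq_map (hg : ∀ S, e.f S = g ⁻¹' S) {μ : PM X} {ν : PM Y} :
    Corr e μ ν ↔ μ = ν.map g := by
  simp only [Corr, hg, ← PM.prob_map]
  exact ⟨fun h => PM.ext fun x => by simpa only [PM.prob_singleton] using h {x},
    fun h _ => h ▸ rfl⟩

lemma fstar_eq_preimage_map (hg : ∀ S, e.f S = g ⁻¹' S) (θ : Set (PM X)) :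
    fstar e θ = PM.map g ⁻¹' θ := by
  ext ν
  simp [fstar, corr_iff_eq_map hg]

end Correspondence

section RelativeEntropy

variable {X Y : Type} [Fintype X] [Fintype Y]

lemma KL_of_absCont {μ' μ : PM X} (h : AbsCont μ' μ) :
    KL μ' μ = ((∑ x, μ'.pm x * Real.log (μ'.pm x / μ.pm x) : ℝ) : EReal) := by
  simp [KL, h]

lemma KL_of_not_absCont {μ' μ : PM X} (h : ¬AbsCont μ' μ) : KL μ' μ = ⊤ := by
  simp [KL, h]

variable [DecidableEq X]

lemma AbsCont.map {ν' ν : PM Y} (h : AbsCont ν' ν) (g : Y → X) :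
    AbsCont (ν'.map g) (ν.map g) := fun _ hx =>
  sum_eq_zero fun y hy => h y ((sum_eq_zero_iff_of_nonneg fun y _ => ν.nonneg y).1 hx y hy)

/-- The data processing inequality for a deterministic channel. -/
theorem KL_map_le (g : Y → X) (ν' ν : PM Y) : KL (ν'.map g) (ν.map g) ≤ KL ν' ν := by
  by_cases h : AbsCont ν' ν
  · rw [KL_of_absCont h, KL_of_absCont (h.map g), EReal.coe_le_coe_iff,
      ← sum_fiberwise univ g fun y => ν'.pm y * Real.log (ν'.pm y / ν.pm y)]
    exact sum_le_sum fun _ _ => sum_mul_log_sum_div_sum_le _ (fun y _ => ν'.nonneg y)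
      (fun y _ => ν.nonneg y) (fun y _ => h y)
  · rw [KL_of_not_absCont h]
    exact le_top

end RelativeEntropy

/-- A Markov kernel from `X` to `Y` carried by the fibres of `g`: `w y` is the conditional
probability of `y` given `g y`. -/
structure FiberKernel {X Y : Type} [Fintype Y] [DecidableEq X] (g : Y → X) where
  w : Y → ℝ
  nonneg : ∀ y, 0 ≤ w y
  sum_fiber : ∀ x, ∑ y ∈ univ.filter (g · = x), w y = 1

namespace FiberKernel

variable {X Y : Type} [Fintype X] [Fintype Y] [DecidableEq X] {g : Y → X} (κ : FiberKernel g)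

lemma sum_comp_mul (F : X → ℝ) : ∑ y, F (g y) * κ.w y = ∑ x, F x := by
  rw [← sum_fiberwise univ g fun y => F (g y) * κ.w y]
  refine sum_congr rfl fun x _ => ?_
  rw [sum_congr rfl fun y hy => by rw [(mem_filter.1 hy).2], ← mul_sum, κ.sum_fiber, mul_one]

noncomputable def lift (μ : PM X) : PM Y where
  pm y := μ.pm (g y) * κ.w y
  nonneg y := mul_nonneg (μ.nonneg _) (κ.nonneg y)
  total := by rw [κ.sum_comp_mul μ.pm, μ.total]

lemma lift_pm (μ : PM X) (y : Y) : (κ.lift μ).pm y = μ.pm (g y) * κ.w y := rfl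

lemma map_lift (μ : PM X) : (κ.lift μ).map g = μ := by
  ext x
  rw [PM.map_pm, sum_congr rfl fun y hy => by rw [lift_pm, (mem_filter.1 hy).2], ← mul_sum,
    κ.sum_fiber, mul_one]

lemma absCont_lift_iff {μ' μ : PM X} : AbsCont (κ.lift μ') (κ.lift μ) ↔ AbsCont μ' μ := by
  refine ⟨fun h => by simpa only [map_lift] using h.map g, fun h y hy => ?_⟩
  rw [lift_pm] at hy ⊢
  rcases mul_eq_zero.1 hy with h0 | h0
  · rw [h _ h0, zero_mul]
  · rw [h0, mul_zero]

theorem KL_lift (μ' μ : PM X) : KL (κ.lift μ') (κ.lift μ) = KL μ' μ := by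
  by_cases h : AbsCont μ' μ
  · rw [KL_of_absCont h, KL_of_absCont (κ.absCont_lift_iff.2 h),
      ← κ.sum_comp_mul fun x => μ'.pm x * Real.log (μ'.pm x / μ.pm x)]
    congr 1
    refine sum_congr rfl fun y _ => ?_
    rcases (κ.nonneg y).eq_or_lt with hw | hw
    · simp [lift_pm, ← hw]
    · rw [lift_pm, lift_pm, mul_div_mul_right _ _ hw.ne']
      ring
  · rw [KL_of_not_absCont h, KL_of_not_absCont (mt κ.absCont_lift_iff.1 h)]

theorem exists_lift_map_eq (hg : Surjective g) (ν : PM Y) :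
    ∃ κ : FiberKernel g, κ.lift (ν.map g) = ν := by
  classical
  choose r hr using hg
  set μ := ν.map g
  have hν : ∀ y, μ.pm (g y) = 0 → ν.pm y = 0 := fun y h =>
    le_antisymm (h ▸ single_le_sum (fun y _ => ν.nonneg y) (by simp)) (ν.nonneg y)
  -- on a null fibre any probability vector will do; the point mass at `r x` needs surjectivity
  let w y := if μ.pm (g y) = 0 then (if y = r (g y) then 1 else 0) else ν.pm y / μ.pm (g y)
  refine ⟨⟨w, fun y => ?_, fun x => ?_⟩, PM.ext fun y => ?_⟩
  · dsimp only [w]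
    split_ifs
    exacts [zero_le_one, le_rfl, div_nonneg (ν.nonneg y) (μ.nonneg _)]
  · have hfib : ∀ y ∈ univ.filter (g · = x),
        w y = if μ.pm x = 0 then (if y = r x then 1 else 0) else ν.pm y / μ.pm x :=
      fun y hy => by simp only [w, (mem_filter.1 hy).2]
    rw [sum_congr rfl hfib]
    by_cases hx : μ.pm x = 0
    · simp [hx, hr x]
    · simp only [hx, if_false, ← sum_div]
      exact div_self hx
  · rw [lift_pm]
    by_cases h : μ.pm (g y) = 0
    · rw [h, zero_mul, hν y h]
    · simp only [w, if_neg h]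
      field_simp

end FiberKernel

section Projection

variable {X Y : Type} [Fintype X] [Fintype Y] [DecidableEq X] {g : Y → X}

lemma exists_map_eq_KL_eq (hg : Surjective g) (μ' : PM X) (ν : PM Y) :
    ∃ ν' : PM Y, ν'.map g = μ' ∧ KL ν' ν = KL μ' (ν.map g) := by
  obtain ⟨κ, hκ⟩ := FiberKernel.exists_lift_map_eq hg ν
  refine ⟨κ.lift μ', κ.map_lift μ', ?_⟩
  calc KL (κ.lift μ') ν = KL (κ.lift μ') (κ.lift (ν.map g)) := by rw [hκ]
    _ = KL μ' (ν.map g) := κ.KL_lift μ' _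

variable {θ : Set (PM X)}

theorem map_mem_klProj (hg : Surjective g) {ν' ν : PM Y} (h : ν' ∈ klProj ν (PM.map g ⁻¹' θ)) :
    ν'.map g ∈ klProj (ν.map g) θ := by
  obtain ⟨hθ, hfin, hmin⟩ := h
  have hle := KL_map_le g ν' ν
  refine ⟨hθ, ne_top_of_le_ne_top hfin hle, fun μ'' hμ'' => ?_⟩
  obtain ⟨ν'', hmap, hKL⟩ := exists_map_eq_KL_eq hg μ'' ν
  calc KL (ν'.map g) (ν.map g) ≤ KL ν' ν := hle
    _ ≤ KL ν'' ν := hmin ν'' (by rwa [Set.mem_preimage, hmap])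
    _ = KL μ'' (ν.map g) := hKL

theorem exists_mem_klProj_map_eq (hg : Surjective g) {μ' : PM X} {ν : PM Y}
    (h : μ' ∈ klProj (ν.map g) θ) :
    ∃ ν' ∈ klProj ν (PM.map g ⁻¹' θ), ν'.map g = μ' := by
  obtain ⟨hθ, hfin, hmin⟩ := h
  obtain ⟨ν', hmap, hKL⟩ := exists_map_eq_KL_eq hg μ' ν
  refine ⟨ν', ⟨by rwa [Set.mem_preimage, hmap], hKL ▸ hfin, fun ν'' hν'' => ?_⟩, hmap⟩
  calc KL ν' ν = KL μ' (ν.map g) := hKL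
    _ ≤ KL (ν''.map g) (ν.map g) := hmin _ hν''
    _ ≤ KL ν'' ν := KL_map_le g ν'' ν

end Projection

/-- relative-entropy projection of corresponding sets of
measures yields corresponding sets. -/
theorem stmt16 {X Y : Type} [Fintype X] [Fintype Y] (e : Emb X Y)
    (hf : e.Faithful) (θ : Set (PM X)) (DX : Set (PM X)) (DY : Set (PM Y))
    (hc : SetCorr e DX DY) :
    SetCorr e (DProj DX θ) (DProj DY (fstar e θ)) := by
  classical
  obtain ⟨g, hsurj, hg⟩ := hf.exists_surjective_eq_preimage
  simp only [SetCorr, DProj, Set.mem_iUnion, exists_prop, corr_iff_eq_map hg,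
    fstar_eq_preimage_map hg] at hc ⊢
  obtain ⟨hYX, hXY⟩ := hc
  constructor
  · rintro ν' ⟨ν, hν, hν'⟩
    obtain ⟨μ, hμ, rfl⟩ := hYX ν hν
    exact ⟨ν'.map g, ⟨ν.map g, hμ, map_mem_klProj hsurj hν'⟩, rfl⟩
  · rintro μ' ⟨μ, hμ, hμ'⟩
    obtain ⟨ν, hν, rfl⟩ := hXY μ hμ
    obtain ⟨ν', hν', rfl⟩ := exists_mem_klProj_map_eq hsurj hμ'
    exact ⟨ν', ⟨ν, hν, hν'⟩, rfl⟩
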